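/- Fix r ∉ ℕ with r > 1, set n := ⌊r⌋ + 1 and ρ := r − ⌊r⌋ ∈ (0,1), and define positions x_j for j = 1,…,2n by x_j := (j−1)/(2r) if j is odd and x_j := 1 − (2n−j)/(2r) if j is even. Let c : [0,1] → [0,1] be differentiable, strictly increasing and concave, with c(0) = 0 and c(1) = 1, write c_j := c(x_j), and fix k ∈ {0,…,n−1}. Define d̂_{k+1} := 0, d̂_j := (1/ρ)·Σ_{i=k+1}^{j−1} (c_{2i} − c_{2i−1}) for k+1 < j ≤ n+1, and d̄_{k+1} := 0, d̄_j := (1/(1−ρ))·Σ_{i=k+1}^{j−1} (c_{2i+1} − c_{2i}) for k+1 < j ≤ n. Then d̄_j ≤ d̂_j for all k+1 ≤ j ≤ n; moreover, if c is strictly concave, then d̄_j < d̂_j for all k+1 < j ≤ n. -/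

import Mathlib

open Set

/-- For a concave, strictly increasing cost function the exponents
satisfy `d̄_j ≤ d̂_j` for `k+1 ≤ j ≤ n`; if moreover `c` is strictly concave, then
`d̄_j < d̂_j` for `k+1 < j ≤ n`. -/
theorem stmt11 (r : ℝ) (hrnat : ¬ ∃ k : ℕ, r = (k : ℝ)) (hr1 : 1 < r)
    (n : ℕ) (hn : n = ⌊r⌋₊ + 1) (ρ : ℝ) (hρ : ρ = r - (⌊r⌋₊ : ℝ))
    (x : ℕ → ℝ)
    (hxo : ∀ j, j % 2 = 1 → x j = ((j : ℝ) - 1) / (2 * r))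
    (hxe : ∀ j, j % 2 = 0 → x j = 1 - ((2 * (n : ℝ)) - (j : ℝ)) / (2 * r))
    (c : ℝ → ℝ)
    (hc_diff : DifferentiableOn ℝ c (Icc 0 1))
    (hc_mono : StrictMonoOn c (Icc 0 1))
    (hc_conc : ConcaveOn ℝ (Icc 0 1) c)
    (hc_maps : Set.MapsTo c (Icc 0 1) (Icc 0 1))
    (hc0 : c 0 = 0) (hc1 : c 1 = 1)
    (k : ℕ) (hk : k ≤ n - 1)
    (dhat dbar : ℕ → ℝ)
    (hdhat : ∀ j, dhat j
      = (1 / ρ) * ∑ i ∈ Finset.Ico (k + 1) j, (c (x (2 * i)) - c (x (2 * i - 1))))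
    (hdbar : ∀ j, dbar j
      = (1 / (1 - ρ)) * ∑ i ∈ Finset.Ico (k + 1) j, (c (x (2 * i + 1)) - c (x (2 * i)))) :
    (∀ j, k + 1 ≤ j → j ≤ n → dbar j ≤ dhat j) ∧
    (StrictConcaveOn ℝ (Icc 0 1) c →
      ∀ j, k + 1 < j → j ≤ n → dbar j < dhat j) := by
  have hr0 : (0:ℝ) < r := lt_trans one_pos hr1
  have hfle : (⌊r⌋₊ : ℝ) ≤ r := Nat.floor_le hr0.le
  have hflt : (⌊r⌋₊ : ℝ) < r :=
    lt_of_le_of_ne hfle (fun h => hrnat ⟨⌊r⌋₊, h.symm⟩)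
  have hρ0 : 0 < ρ := by rw [hρ]; linarith
  have hρ1 : ρ < 1 := by
    have h := Nat.lt_floor_add_one r
    rw [hρ]; push_cast at h ⊢; linarith
  have hnr : (n : ℝ) = (⌊r⌋₊ : ℝ) + 1 := by rw [hn]; push_cast; ring
  -- auxiliary facts about the points, for `k+1 ≤ i < n`
  have key : ∀ i, k + 1 ≤ i → i < n →
      ((1 / (1 - ρ)) * (c (x (2 * i + 1)) - c (x (2 * i)))
        ≤ (1 / ρ) * (c (x (2 * i)) - c (x (2 * i - 1)))) ∧
      (StrictConcaveOn ℝ (Icc 0 1) c →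
        (1 / (1 - ρ)) * (c (x (2 * i + 1)) - c (x (2 * i)))
          < (1 / ρ) * (c (x (2 * i)) - c (x (2 * i - 1)))) := by
    intro i hi1 hin
    have hi : 1 ≤ i := by omega
    have ha : x (2 * i - 1) = ((i : ℝ) - 1) / r := by
      rw [hxo _ (by omega)]
      have hcast : ((2 * i - 1 : ℕ) : ℝ) = 2 * (i : ℝ) - 1 := by
        rw [Nat.cast_sub (by omega)]; push_cast; ring
      rw [hcast]; field_simp; ring
    have hb : x (2 * i) = 1 - ((n : ℝ) - (i : ℝ)) / r := by
      rw [hxe _ (by omega)]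
      push_cast
      field_simp
    have hd : x (2 * i + 1) = (i : ℝ) / r := by
      rw [hxo _ (by omega)]
      push_cast
      field_simp
      ring
    have hba : (1 - ((n : ℝ) - (i : ℝ)) / r) - (((i : ℝ) - 1) / r) = ρ / r := by
      rw [hρ, hnr]; field_simp; ring
    have hdb : ((i : ℝ) / r) - (1 - ((n : ℝ) - (i : ℝ)) / r) = (1 - ρ) / r := by
      rw [hρ, hnr]; field_simp; ring
    have hab : (((i : ℝ) - 1) / r) < 1 - ((n : ℝ) - (i : ℝ)) / r := by
      have h2 : (0:ℝ) < ρ / r := div_pos hρ0 hr0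
      linarith
    have hbd : (1 - ((n : ℝ) - (i : ℝ)) / r) < (i : ℝ) / r := by
      have h2 : (0:ℝ) < (1 - ρ) / r := div_pos (by linarith) hr0
      linarith
    have ha0 : 0 ≤ ((i : ℝ) - 1) / r := by
      apply div_nonneg _ hr0.le
      have : (1:ℝ) ≤ (i:ℝ) := by exact_mod_cast hi
      linarith
    have hd1 : (i : ℝ) / r ≤ 1 := by
      rw [div_le_one hr0]
      have : (i:ℝ) ≤ (n:ℝ) - 1 := by
        have : (i:ℝ) + 1 ≤ (n:ℝ) := by exact_mod_cast hin
        linarith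
      rw [hnr] at this
      linarith
    have hamem : (((i : ℝ) - 1) / r) ∈ Icc (0:ℝ) 1 := ⟨ha0, by linarith⟩
    have hdmem : ((i : ℝ) / r) ∈ Icc (0:ℝ) 1 := ⟨by linarith, hd1⟩
    have hρ1' : (0:ℝ) < 1 - ρ := by linarith
    constructor
    · have h := hc_conc.slope_anti_adjacent hamem hdmem hab hbd
      rw [hba, hdb, div_div_eq_mul_div, div_div_eq_mul_div] at h
      rw [ha, hb, hd]
      rw [div_le_div_iff₀ hρ1' hρ0] at h
      rw [one_div, one_div, inv_mul_eq_div, inv_mul_eq_div, div_le_div_iff₀ hρ1' hρ0]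
      nlinarith [hr0, h]
    · intro hsc
      have h := hsc.slope_anti_adjacent hamem hdmem hab hbd
      rw [hba, hdb, div_div_eq_mul_div, div_div_eq_mul_div] at h
      rw [ha, hb, hd]
      rw [div_lt_div_iff₀ hρ1' hρ0] at h
      rw [one_div, one_div, inv_mul_eq_div, inv_mul_eq_div, div_lt_div_iff₀ hρ1' hρ0]
      nlinarith [hr0, h]
  constructor
  · intro j hj1 hj2
    rw [hdhat, hdbar, Finset.mul_sum, Finset.mul_sum]
    apply Finset.sum_le_sum
    intro i hi
    rw [Finset.mem_Ico] at hi
    exact (key i hi.1 (lt_of_lt_of_le hi.2 hj2)).1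
  · intro hsc j hj1 hj2
    rw [hdhat, hdbar, Finset.mul_sum, Finset.mul_sum]
    apply Finset.sum_lt_sum_of_nonempty
    · rw [Finset.nonempty_Ico]; omega
    · intro i hi
      rw [Finset.mem_Ico] at hi
      exact (key i hi.1 (lt_of_lt_of_le hi.2 hj2)).2 hsc
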